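/- arXiv:1408.6102 — 7 statements merged into one kernel-verified Lean document; each statement's English description precedes it below -/
import Mathlib

section
/- Let R be a ring, let F, G : ModuleCat R ⥤ ModuleCat R be additive functors such that F preserves epimorphisms, and let α : F ⟶ G be a natural transformation. Let M be an R-module and let N₁, N₂ be submodules of M such that the components of α at N₁ and at N₂ (regarded as objects of ModuleCat R) are zero. Then the component of α at the submodule N₁ ⊔ N₂ is zero. -/
/-!
The components of `α` that vanish are closed under binary biproducts, because `F` is additive
and `𝟙 (X ⊞ Y)` splits as `fst ≫ inl + snd ≫ inr`; and they are closed under quotients `p`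
for which `F.map p` is epi, by naturality. Since `N₁ ⊞ N₂` maps onto `N₁ ⊔ N₂`, both apply.
-/

open CategoryTheory Limits

universe u

namespace CategoryTheory.NatTrans

variable {C D : Type*} [Category C] [Category D]

theorem app_eq_zero_of_epi [HasZeroMorphisms D] {F G : C ⥤ D} (α : F ⟶ G) {X Y : C}
    (p : X ⟶ Y) [Epi (F.map p)] (hX : α.app X = 0) : α.app Y = 0 := by
  rw [← cancel_epi (F.map p), α.naturality, hX, zero_comp, comp_zero]

theorem app_biprod_eq_zero [Preadditive C] [Preadditive D] {F G : C ⥤ D} [F.Additive]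
    (α : F ⟶ G) {X Y : C} [HasBinaryBiproduct X Y] (hX : α.app X = 0) (hY : α.app Y = 0) :
    α.app (X ⊞ Y) = 0 :=
  calc α.app (X ⊞ Y) = F.map (𝟙 (X ⊞ Y)) ≫ α.app (X ⊞ Y) := by simp
    _ = F.map biprod.fst ≫ α.app X ≫ G.map biprod.inl
        + F.map biprod.snd ≫ α.app Y ≫ G.map biprod.inr := by
      simp only [← biprod.total, F.map_add, F.map_comp, Preadditive.add_comp, Category.assoc,
        α.naturality]
    _ = 0 := by simp [hX, hY]

end CategoryTheory.NatTrans

namespace ModuleCat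

variable {R : Type u} [Ring R] {M : Type u} [AddCommGroup M] [Module R M]

theorem epi_biprod_desc_inclusion_sup (N₁ N₂ : Submodule R M) :
    Epi (biprod.desc (ofHom (Submodule.inclusion le_sup_left))
      (ofHom (Submodule.inclusion le_sup_right)) : of R N₁ ⊞ of R N₂ ⟶ of R ↥(N₁ ⊔ N₂)) := by
  rw [epi_iff_surjective]
  rintro ⟨z, hz⟩
  obtain ⟨x, hx, y, hy, rfl⟩ := Submodule.mem_sup.mp hz
  refine ⟨(biprod.inl : of R N₁ ⟶ _) ⟨x, hx⟩ + (biprod.inr : of R N₂ ⟶ _) ⟨y, hy⟩, ?_⟩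
  simp only [map_add, ← ConcreteCategory.comp_apply, biprod.inl_desc, biprod.inr_desc,
    ConcreteCategory.hom_ofHom]
  rfl

end ModuleCat

theorem natTrans_app_sup_zero_general (R : Type u) [Ring R]
    (F G : ModuleCat.{u} R ⥤ ModuleCat.{u} R) [F.Additive]
    [F.PreservesEpimorphisms] (α : F ⟶ G)
    (M : Type u) [AddCommGroup M] [Module R M] (N₁ N₂ : Submodule R M)
    (h₁ : α.app (ModuleCat.of R N₁) = 0) (h₂ : α.app (ModuleCat.of R N₂) = 0) :
    α.app (ModuleCat.of R (↥(N₁ ⊔ N₂))) = 0 := by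
  have := ModuleCat.epi_biprod_desc_inclusion_sup N₁ N₂
  exact α.app_eq_zero_of_epi (biprod.desc (ModuleCat.ofHom (Submodule.inclusion le_sup_left))
    (ModuleCat.ofHom (Submodule.inclusion le_sup_right))) (α.app_biprod_eq_zero h₁ h₂)

/-- If a natural transformation `α : F ⟶ G` between additive endofunctors of `ModuleCat R`,
with `F` preserving epimorphisms, annihilates submodules `N₁` and `N₂` of `M`, then it
annihilates `N₁ ⊔ N₂`. -/
theorem natTrans_app_sup_zero (R : Type u) [Ring R]
    (F G : ModuleCat.{u} R ⥤ ModuleCat.{u} R) [F.Additive] [G.Additive]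
    [F.PreservesEpimorphisms] (α : F ⟶ G)
    (M : Type u) [AddCommGroup M] [Module R M] (N₁ N₂ : Submodule R M)
    (h₁ : α.app (ModuleCat.of R N₁) = 0) (h₂ : α.app (ModuleCat.of R N₂) = 0) :
    α.app (ModuleCat.of R (↥(N₁ ⊔ N₂))) = 0 :=
  natTrans_app_sup_zero_general R F G α M N₁ N₂ h₁ h₂
end

section
/- Let R be a ring, let F, G : ModuleCat R ⥤ ModuleCat R be additive functors such that G preserves monomorphisms, and let α : F ⟶ G be a natural transformation. Let M be an R-module and let N₁, N₂ be submodules of M such that the components of α at the quotient modules M ⧸ N₁ and M ⧸ N₂ (regarded as objects of ModuleCat R) are zero. Then the component of α at M ⧸ (N₁ ⊓ N₂) is zero. -/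
open CategoryTheory CategoryTheory.Limits

universe u

namespace CategoryTheory.NatTrans

variable {C D : Type*} [Category C] [Category D] {F G : C ⥤ D}

theorem app_eq_zero_of_mono [HasZeroMorphisms D] [G.PreservesMonomorphisms] (α : F ⟶ G)
    {X Y : C} (i : X ⟶ Y) [Mono i] (h : α.app Y = 0) : α.app X = 0 := by
  rw [← cancel_mono (G.map i), ← α.naturality, h, comp_zero, zero_comp]

theorem app_biprod_eq_zero_s4 [Preadditive C] [Preadditive D] [HasBinaryBiproducts C]
    [G.Additive] (α : F ⟶ G) {A B : C} (hA : α.app A = 0) (hB : α.app B = 0) :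
    α.app (A ⊞ B) = 0 := by
  -- not found by instance search from `G.Additive` alone
  have := preservesBinaryBiproducts_of_preservesBiproducts G
  rw [← cancel_mono (G.mapBiprod A B).hom, Functor.mapBiprod_hom, zero_comp]
  ext
  · rw [Category.assoc, biprod.lift_fst, ← α.naturality, hA, comp_zero, zero_comp]
  · rw [Category.assoc, biprod.lift_snd, ← α.naturality, hB, comp_zero, zero_comp]

end CategoryTheory.NatTrans

namespace Submodule

variable {R M : Type*} [Ring R] [AddCommGroup M] [Module R M] (N₁ N₂ : Submodule R M)

theorem ker_mkQ_prod_mkQ : LinearMap.ker (N₁.mkQ.prod N₂.mkQ) = N₁ ⊓ N₂ := by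
  rw [LinearMap.ker_prod, ker_mkQ, ker_mkQ]

def quotientInfToProdQuotient : M ⧸ (N₁ ⊓ N₂) →ₗ[R] (M ⧸ N₁) × (M ⧸ N₂) :=
  (N₁ ⊓ N₂).liftQ _ (ker_mkQ_prod_mkQ N₁ N₂).ge

theorem injective_quotientInfToProdQuotient :
    Function.Injective (quotientInfToProdQuotient N₁ N₂) :=
  LinearMap.ker_eq_bot.mp (ker_liftQ_eq_bot' _ _ (ker_mkQ_prod_mkQ N₁ N₂).symm)

end Submodule

theorem natTrans_app_quotient_inf_zero_general (R : Type u) [Ring R]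
    (F G : ModuleCat.{u} R ⥤ ModuleCat.{u} R) [G.Additive]
    [G.PreservesMonomorphisms] (α : F ⟶ G)
    (M : Type u) [AddCommGroup M] [Module R M] (N₁ N₂ : Submodule R M)
    (h₁ : α.app (ModuleCat.of R (M ⧸ N₁)) = 0)
    (h₂ : α.app (ModuleCat.of R (M ⧸ N₂)) = 0) :
    α.app (ModuleCat.of R (M ⧸ (N₁ ⊓ N₂))) = 0 := by
  let j := ModuleCat.ofHom (Submodule.quotientInfToProdQuotient N₁ N₂)
  have : Mono j := (ModuleCat.mono_iff_injective j).mpr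
    (Submodule.injective_quotientInfToProdQuotient N₁ N₂)
  exact α.app_eq_zero_of_mono
    (j ≫ (ModuleCat.biprodIsoProd (.of R (M ⧸ N₁)) (.of R (M ⧸ N₂))).inv)
    (α.app_biprod_eq_zero_s4 h₁ h₂)

/-- If a natural transformation `α : F ⟶ G` between additive endofunctors of `ModuleCat R`,
with `G` preserving monomorphisms, annihilates the quotients `M ⧸ N₁` and `M ⧸ N₂`, then it
annihilates `M ⧸ (N₁ ⊓ N₂)`. -/
theorem natTrans_app_quotient_inf_zero (R : Type u) [Ring R]
    (F G : ModuleCat.{u} R ⥤ ModuleCat.{u} R) [F.Additive] [G.Additive]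
    [G.PreservesMonomorphisms] (α : F ⟶ G)
    (M : Type u) [AddCommGroup M] [Module R M] (N₁ N₂ : Submodule R M)
    (h₁ : α.app (ModuleCat.of R (M ⧸ N₁)) = 0)
    (h₂ : α.app (ModuleCat.of R (M ⧸ N₂)) = 0) :
    α.app (ModuleCat.of R (M ⧸ (N₁ ⊓ N₂))) = 0 :=
  natTrans_app_quotient_inf_zero_general R F G α M N₁ N₂ h₁ h₂
end

section
/- Let R be a ring, let F, G : ModuleCat R ⥤ ModuleCat R be additive functors such that G preserves monomorphisms, and let α : F ⟶ G be a natural transformation. Let M be an R-module and let U, N be submodules of M such that the component of α at the quotient M ⧸ U is zero. Then the component of α at the quotient of N by the submodule U ⊓ N (that is, at N ⧸ ((U ⊓ N).comap N.subtype), regarded as an object of ModuleCat R) is zero. -/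
open CategoryTheory

universe u

theorem Submodule.injective_mapQ_comap {R M M₂ : Type*} [Ring R] [AddCommGroup M] [Module R M]
    [AddCommGroup M₂] [Module R M₂] (f : M →ₗ[R] M₂) (q : Submodule R M₂) :
    Function.Injective (mapQ (q.comap f) q f le_rfl) := by
  rw [← LinearMap.ker_eq_bot, ker_mapQ, mkQ_map_self]

theorem CategoryTheory.NatTrans.app_eq_zero_of_mono_s8 {C D : Type*} [Category C] [Category D]
    [Limits.HasZeroMorphisms D] {F G : C ⥤ D} [G.PreservesMonomorphisms] (α : F ⟶ G)
    {X Y : C} (f : X ⟶ Y) [Mono f] (h : α.app Y = 0) : α.app X = 0 := by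
  rw [← cancel_mono (G.map f), ← α.naturality, h, Limits.comp_zero, Limits.zero_comp]

theorem natTrans_app_quotient_inf_sub_zero_general (R : Type u) [Ring R]
    (F G : ModuleCat.{u} R ⥤ ModuleCat.{u} R)
    [G.PreservesMonomorphisms] (α : F ⟶ G)
    (M : Type u) [AddCommGroup M] [Module R M] (U N : Submodule R M)
    (h : α.app (ModuleCat.of R (M ⧸ U)) = 0) :
    α.app (ModuleCat.of R (N ⧸ (Submodule.comap N.subtype (U ⊓ N)))) = 0 := by
  have hUN : Submodule.comap N.subtype (U ⊓ N) = Submodule.comap N.subtype U := by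
    rw [Submodule.comap_inf, Submodule.comap_subtype_self, inf_top_eq]
  rw [hUN]
  let ι := ModuleCat.ofHom (Submodule.mapQ _ U N.subtype le_rfl)
  have : Mono ι := (ModuleCat.mono_iff_injective ι).mpr (Submodule.injective_mapQ_comap _ U)
  exact α.app_eq_zero_of_mono_s8 ι h

/-- If a natural transformation `α : F ⟶ G` between additive endofunctors of `ModuleCat R`,
with `G` preserving monomorphisms, annihilates the quotient `M ⧸ U`, then it annihilates
`N ⧸ (U ⊓ N)` for any submodule `N` of `M` (since the latter embeds into the former by the
isomorphism theorem). -/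
theorem natTrans_app_quotient_inf_sub_zero (R : Type u) [Ring R]
    (F G : ModuleCat.{u} R ⥤ ModuleCat.{u} R) [F.Additive] [G.Additive]
    [G.PreservesMonomorphisms] (α : F ⟶ G)
    (M : Type u) [AddCommGroup M] [Module R M] (U N : Submodule R M)
    (h : α.app (ModuleCat.of R (M ⧸ U)) = 0) :
    α.app (ModuleCat.of R (N ⧸ (Submodule.comap N.subtype (U ⊓ N)))) = 0 :=
  natTrans_app_quotient_inf_sub_zero_general R F G α M U N h
end

section
/- Let n be a nonempty finite type, let d be a real number, and let M, Q : Matrix n n ℝ be square matrices such that every entry of M is strictly positive, every entry of Q is nonnegative, M * M = d • M, and M * Q + Q * M = d • Q. Then Q = 0. -/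
/-- If `M` is a strictly positive real square matrix with `M * M = d • M`, and `Q` is a
nonnegative matrix with `M * Q + Q * M = d • Q`, then `Q = 0`. -/
theorem matrix_eq_zero_of_pos_of_nonneg {n : Type*} [Fintype n] [Nonempty n]
    (d : ℝ) (M Q : Matrix n n ℝ)
    (hM : ∀ i j, 0 < M i j) (hQ : ∀ i j, 0 ≤ Q i j)
    (hMM : M * M = d • M) (hMQ : M * Q + Q * M = d • Q) :
    Q = 0 := by
  have key : M * Q * M = 0 := by
    have h1 : M * (M * Q + Q * M) = M * (d • Q) := by rw [hMQ]
    have h2 : d • (M * Q) + M * Q * M = d • (M * Q) := by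
      calc d • (M * Q) + M * Q * M = M * M * Q + M * (Q * M) := by
            rw [hMM, Matrix.smul_mul, Matrix.mul_assoc]
        _ = M * (M * Q + Q * M) := by rw [Matrix.mul_add, Matrix.mul_assoc]
        _ = M * (d • Q) := h1
        _ = d • (M * Q) := by rw [Matrix.mul_smul]
    exact add_eq_left.mp h2
  ext k l
  obtain ⟨i⟩ := ‹Nonempty n›
  have hent : (M * Q * M) i i = 0 := by rw [key]; rfl
  rw [Matrix.mul_apply] at hent
  simp only [Matrix.mul_apply, Finset.sum_mul] at hent
  have hterm : ∀ b a : n, (0:ℝ) ≤ M i a * Q a b * M b i :=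
    fun b a => mul_nonneg (mul_nonneg (hM i a).le (hQ a b)) (hM b i).le
  have h3 := (Finset.sum_eq_zero_iff_of_nonneg (fun b _ =>
    Finset.sum_nonneg (fun a _ => hterm b a))).mp hent l (Finset.mem_univ l)
  have hQkl := (Finset.sum_eq_zero_iff_of_nonneg (fun a _ =>
    hterm l a)).mp h3 k (Finset.mem_univ k)
  simp only [Matrix.zero_apply]
  nlinarith [hM i k, hM l i, hQ k l, mul_pos (hM i k) (hM l i)]
end

section
/- Let m be a finite linearly ordered type, let n be a finite type, let d be a real number, and let X : Matrix (m × n) (m × n) ℝ be a matrix with nonnegative entries such that X * X = d • X. Assume that X is block upper triangular, i.e., X (i,a) (j,b) = 0 whenever j < i, and that every diagonal block is strictly positive, i.e., X (i,a) (i,b) > 0 for all i ∈ m and a, b ∈ n. Then X is block diagonal: X (i,a) (j,b) = 0 whenever i ≠ j. -/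
/-- A nonnegative real block matrix `X` (blocks indexed by a finite linearly ordered type `m`,
each block of size `n × n`) satisfying `X * X = d • X`, which is block upper triangular with
strictly positive diagonal blocks, is block diagonal. -/
theorem blockMatrix_offDiagonal_eq_zero {m n : Type*} [Fintype m] [LinearOrder m] [Fintype n]
    (d : ℝ) (X : Matrix (m × n) (m × n) ℝ)
    (hnonneg : ∀ p q, 0 ≤ X p q)
    (hXX : X * X = d • X)
    (htri : ∀ (i j : m) (a b : n), j < i → X (i, a) (j, b) = 0)
    (hdiag : ∀ (i : m) (a b : n), 0 < X (i, a) (i, b)) :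
    ∀ (i j : m) (a b : n), i ≠ j → X (i, a) (j, b) = 0 := by
  intro i j a b hij
  rcases hij.lt_or_gt with h | h
  swap
  · exact htri i j a b h
  -- now h : i < j
  suffices key : ∀ c c', X (i, c) (j, c') = 0 from key a b
  have hmul : ∀ p q : m × n, (X * X) p q = d * X p q := by
    intro p q; rw [hXX]; rfl
  -- within-block-j multiplication
  have key2 : ∀ c : n, (∑ c', X (j, c) (j, c') * X (j, c') (j, b)) = d * X (j, c) (j, b) := by
    intro c
    have hm := hmul (j, c) (j, b)
    rw [Matrix.mul_apply, Fintype.sum_prod_type] at hm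
    have hsingle : (∑ k : m, ∑ e : n, X (j, c) (k, e) * X (k, e) (j, b))
        = ∑ e : n, X (j, c) (j, e) * X (j, e) (j, b) := by
      refine Finset.sum_eq_single j ?_ ?_
      · intro k _ hk
        rcases hk.lt_or_gt with hk' | hk'
        · exact Finset.sum_eq_zero fun e _ => by rw [htri j k c e hk', zero_mul]
        · exact Finset.sum_eq_zero fun e _ => by rw [htri k j e b hk', mul_zero]
      · intro hj; exact absurd (Finset.mem_univ j) hj
    rw [← hm, hsingle]
  -- the inequality from row (i,a), column (j, c')
  have key1 : ∀ c' : n,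
      (∑ c, X (i, a) (i, c) * X (i, c) (j, c')) + (∑ c, X (i, a) (j, c) * X (j, c) (j, c'))
        ≤ d * X (i, a) (j, c') := by
    intro c'
    have hm := hmul (i, a) (j, c')
    rw [Matrix.mul_apply, Fintype.sum_prod_type] at hm
    rw [← hm]
    have hle : (∑ k ∈ ({i, j} : Finset m), ∑ e : n, X (i, a) (k, e) * X (k, e) (j, c'))
        ≤ ∑ k : m, ∑ e : n, X (i, a) (k, e) * X (k, e) (j, c') :=
      Finset.sum_le_sum_of_subset_of_nonneg (Finset.subset_univ _)
        (fun k _ _ => Finset.sum_nonneg fun e _ => mul_nonneg (hnonneg _ _) (hnonneg _ _))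
    rwa [Finset.sum_pair h.ne] at hle
  -- multiply key1 by v c' = X (j,c') (j,b) ≥ 0 and sum over c'
  have h2 : (∑ c', ((∑ c, X (i, a) (i, c) * X (i, c) (j, c'))
        + (∑ c, X (i, a) (j, c) * X (j, c) (j, c'))) * X (j, c') (j, b))
      ≤ ∑ c', d * X (i, a) (j, c') * X (j, c') (j, b) := by
    refine Finset.sum_le_sum fun c' _ => ?_
    exact mul_le_mul_of_nonneg_right (key1 c') (hnonneg (j, c') (j, b))
  have h3 : (∑ c', (∑ c, X (i, a) (j, c) * X (j, c) (j, c')) * X (j, c') (j, b))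
      = ∑ c', d * X (i, a) (j, c') * X (j, c') (j, b) := by
    calc (∑ c', (∑ c, X (i, a) (j, c) * X (j, c) (j, c')) * X (j, c') (j, b))
        = ∑ c, X (i, a) (j, c) * ∑ c', X (j, c) (j, c') * X (j, c') (j, b) := by
          simp_rw [Finset.sum_mul, Finset.mul_sum, mul_assoc]
          exact Finset.sum_comm
      _ = ∑ c, X (i, a) (j, c) * (d * X (j, c) (j, b)) := by
          exact Finset.sum_congr rfl fun c _ => by rw [key2 c]
      _ = ∑ c', d * X (i, a) (j, c') * X (j, c') (j, b) := by
          refine Finset.sum_congr rfl fun c _ => by ring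
  simp_rw [add_mul, Finset.sum_add_distrib] at h2
  rw [h3] at h2
  have hS : (∑ c', (∑ c, X (i, a) (i, c) * X (i, c) (j, c')) * X (j, c') (j, b)) ≤ 0 := by
    linarith
  have hS0 : ∀ c' ∈ Finset.univ,
      (∑ c, X (i, a) (i, c) * X (i, c) (j, c')) * X (j, c') (j, b) = 0 := by
    rw [← Finset.sum_eq_zero_iff_of_nonneg]
    · exact le_antisymm hS (Finset.sum_nonneg fun c' _ => mul_nonneg
        (Finset.sum_nonneg fun c _ => mul_nonneg (hnonneg _ _) (hnonneg _ _)) (hnonneg _ _))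
    · exact fun c' _ => mul_nonneg
        (Finset.sum_nonneg fun c _ => mul_nonneg (hnonneg _ _) (hnonneg _ _)) (hnonneg _ _)
  intro c c'
  have hA : (∑ cc, X (i, a) (i, cc) * X (i, cc) (j, c')) = 0 := by
    have := hS0 c' (Finset.mem_univ c')
    rcases mul_eq_zero.mp this with h' | h'
    · exact h'
    · exact absurd h' (hdiag j c' b).ne'
  have hterm : X (i, a) (i, c) * X (i, c) (j, c') = 0 := by
    have := (Finset.sum_eq_zero_iff_of_nonneg
      (fun cc _ => mul_nonneg (hnonneg _ _) (hnonneg _ _))).mp hA c (Finset.mem_univ c)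
    exact this
  rcases mul_eq_zero.mp hterm with h' | h'
  · exact absurd h' (hdiag i a c).ne'
  · exact h'
end

section
/- Let k be an algebraically closed field and let A and B be finite-dimensional associative unital k-algebras (not necessarily commutative). If A and B are both local rings, then the tensor product algebra A ⊗[k] B is a local ring. -/
/-!
Let `J` be the Jacobson radical of `A`. As `A` is local and finite-dimensional, `A ⧸ J` is a
finite-dimensional division algebra over the algebraically closed field `k`, hence is `k`, and `J`
is nilpotent. The resulting `ε : A →ₐ[k] k` gives a surjection `A ⊗[k] B → k ⊗[k] B ≃ B` whose
kernel `J ⊗ B` is again nilpotent, and units lift along such a surjection, so `A ⊗[k] B` is local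
because `B` is.
-/

open scoped TensorProduct

universe u

theorem isLocalHom_of_surjective_of_ker_nil {R S : Type*} [Ring R] [Ring S] (f : R →+* S)
    (hf : Function.Surjective f) (hker : ∀ x ∈ RingHom.ker f, IsNilpotent x) :
    IsLocalHom f where
  map_nonunit a ha := by
    have isUnit_of_map_eq_one : ∀ x, f x = 1 → IsUnit x := fun x hx => by
      simpa using (hker (x - 1) (by simp [RingHom.mem_ker, hx])).isUnit_one_add
    obtain ⟨b, hb⟩ := hf ↑ha.unit⁻¹
    obtain ⟨u, hu⟩ := isUnit_of_map_eq_one (a * b) (by simp [hb])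
    obtain ⟨v, hv⟩ := isUnit_of_map_eq_one (b * a) (by simp [hb])
    refine isUnit_iff_exists_and_exists.2 ⟨⟨b * ↑u⁻¹, ?_⟩, ⟨↑v⁻¹ * b, ?_⟩⟩
    · rw [← mul_assoc, ← hu, Units.mul_inv]
    · rw [mul_assoc, ← hv, Units.inv_mul]

namespace IsLocalRing

variable {R : Type*} [Ring R] [IsLocalRing R] [IsDedekindFiniteMonoid R]

theorem mem_jacobson_iff_not_isUnit {x : R} : x ∈ Ring.jacobson R ↔ ¬IsUnit x := by
  refine ⟨fun hx hu => (Ring.jacobson_lt_top R).ne (Ideal.eq_top_of_isUnit_mem _ hx hu),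
    fun hx => ?_⟩
  rw [← Ideal.jacobson_bot, Ideal.mem_jacobson_iff]
  intro y
  have hyx : ¬IsUnit (y * x) := fun h => hx (isUnit_of_mul_isUnit_right h)
  obtain ⟨u, hu⟩ : IsUnit (y * x + 1) :=
    (isUnit_or_isUnit_of_add_one (b := -(y * x)) (by abel)).resolve_right
      (by rwa [IsUnit.neg_iff])
  refine ⟨↑u⁻¹, ?_⟩
  rw [Ideal.mem_bot, mul_assoc, ← mul_add_one (↑u⁻¹ : R), ← hu, Units.inv_mul, sub_self]

theorem isUnit_or_eq_zero_quotient_jacobson (a : R ⧸ Ring.jacobson R) : IsUnit a ∨ a = 0 := by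
  obtain ⟨x, rfl⟩ := Ideal.Quotient.mk_surjective a
  by_cases hx : IsUnit x
  · exact .inl (hx.map _)
  · exact .inr (Ideal.Quotient.eq_zero_iff_mem.2 (mem_jacobson_iff_not_isUnit.2 hx))

instance : IsDomain (R ⧸ Ring.jacobson R) :=
  haveI : Nontrivial (R ⧸ Ring.jacobson R) :=
    Ideal.Quotient.nontrivial_iff.2 (Ring.jacobson_lt_top R).ne
  @DivisionRing.isDomain _ (DivisionRing.ofIsUnitOrEqZero isUnit_or_eq_zero_quotient_jacobson)

end IsLocalRing

theorem exists_algHom_isNilpotent_ker (k A : Type*) [Field k] [IsAlgClosed k] [Ring A]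
    [Algebra k A] [FiniteDimensional k A] [IsLocalRing A] :
    ∃ ε : A →ₐ[k] k, IsNilpotent (RingHom.ker ε) := by
  have : IsArtinianRing A := IsArtinianRing.of_finite k A
  have hbij := IsAlgClosed.algebraMap_bijective_of_isIntegral (k := k) (K := A ⧸ Ring.jacobson A)
  let ε : A →ₐ[k] k := (AlgEquiv.ofBijective (Algebra.ofId k _) hbij).symm.toAlgHom.comp
    (Ideal.Quotient.mkₐ k (Ring.jacobson A))
  have hker : RingHom.ker ε = Ideal.jacobson ⊥ := by
    ext x
    simp [ε, RingHom.mem_ker, Ideal.Quotient.eq_zero_iff_mem, Ideal.jacobson_bot]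
  exact ⟨ε, hker ▸ IsArtinianRing.isNilpotent_jacobson_bot⟩

section TensorProduct

variable {k A B : Type*} [CommRing k] [Ring A] [Ring B] [Algebra k A] [Algebra k B]

theorem range_rTensor_subtype_mul_le (P Q : Submodule k A) :
    LinearMap.range (P.subtype.rTensor B) * LinearMap.range (Q.subtype.rTensor B) ≤
      LinearMap.range ((P * Q).subtype.rTensor B) := by
  simp only [LinearMap.rTensor, TensorProduct.range_map_eq_span_tmul, Submodule.span_mul_span]
  refine Submodule.span_le.2 ?_
  rintro _ ⟨_, ⟨p, b, rfl⟩, _, ⟨q, c, rfl⟩, rfl⟩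
  exact Submodule.subset_span ⟨⟨p * q, Submodule.mul_mem_mul p.2 q.2⟩, b * c, by simp⟩

theorem range_rTensor_subtype_pow_le (P : Submodule k A) (n : ℕ) :
    LinearMap.range (P.subtype.rTensor B) ^ n ≤ LinearMap.range ((P ^ n).subtype.rTensor B) := by
  induction n with
  | zero =>
    rw [Submodule.pow_zero, Submodule.pow_zero, Submodule.one_le]
    exact ⟨⟨1, Submodule.one_le.1 le_rfl⟩ ⊗ₜ 1, rfl⟩
  | succ n ih =>
    rw [Submodule.pow_succ, Submodule.pow_succ]
    exact (mul_le_mul' ih le_rfl).trans (range_rTensor_subtype_mul_le _ _)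

theorem isNilpotent_of_mem_ker_tensorProduct_map {C : Type*} [Ring C] [Algebra k C]
    (f : A →ₐ[k] C) (hf : Function.Surjective f) (hker : IsNilpotent (RingHom.ker f))
    (t : A ⊗[k] B) (ht : t ∈ RingHom.ker (Algebra.TensorProduct.map f (AlgHom.id k B))) :
    IsNilpotent t := by
  obtain ⟨n, hn⟩ := hker
  have hpow : (RingHom.ker f).restrictScalars k ^ (n + 1) = ⊥ := by
    rw [← Submodule.restrictScalars_pow n.succ_ne_zero, Submodule.pow_succ, hn]
    simp
  rw [Algebra.TensorProduct.rTensor_ker _ hf, ← Submodule.restrictScalars_mem k,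
    Ideal.map_includeLeft_eq] at ht
  have htpow := range_rTensor_subtype_pow_le (B := B) _ (n + 1) (Submodule.pow_mem_pow _ ht _)
  rw [hpow] at htpow
  have hbot : (⊥ : Submodule k A).subtype = 0 := by ext x; simp [Subsingleton.elim x 0]
  exact ⟨n + 1, by simpa [hbot] using htpow⟩

end TensorProduct

theorem isLocalRing_tensorProduct_general (k : Type u) [Field k] [IsAlgClosed k]
    (A B : Type u) [Ring A] [Ring B] [Algebra k A] [Algebra k B]
    [FiniteDimensional k A]
    [IsLocalRing A] [IsLocalRing B] :
    IsLocalRing (A ⊗[k] B) := by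
  obtain ⟨ε, hε⟩ := exists_algHom_isNilpotent_ker k A
  have hε_surj : Function.Surjective ε := fun c => ⟨algebraMap k A c, by simp⟩
  let f := Algebra.TensorProduct.map ε (AlgHom.id k B)
  have : IsLocalHom (f : A ⊗[k] B →+* k ⊗[k] B) :=
    isLocalHom_of_surjective_of_ker_nil _
      (Algebra.TensorProduct.map_surjective ε (AlgHom.id k B) hε_surj Function.surjective_id)
      (isNilpotent_of_mem_ker_tensorProduct_map ε hε_surj hε)
  exact (((Algebra.TensorProduct.lid k B) : k ⊗[k] B →+* B).comp f).domain_isLocalRing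

/-- Over an algebraically closed field, the tensor product of two finite-dimensional local
algebras is local. -/
theorem isLocalRing_tensorProduct (k : Type u) [Field k] [IsAlgClosed k]
    (A B : Type u) [Ring A] [Ring B] [Algebra k A] [Algebra k B]
    [FiniteDimensional k A] [FiniteDimensional k B]
    [IsLocalRing A] [IsLocalRing B] :
    IsLocalRing (A ⊗[k] B) :=
  isLocalRing_tensorProduct_general k A B
end

section
/- Let 𝒜 be an abelian category, let F, F', G, G' : 𝒜 ⥤ 𝒜 be additive functors such that F preserves cokernels and G preserves epimorphisms, and let β : G ⟶ F and β' : G' ⟶ F' be natural transformations. Fix an object X of 𝒜, let C' = cokernel(β'_X) with canonical projection c : F'(X) ⟶ C'. Then the cokernel of the component β_{C'} : G(C') ⟶ F(C') is isomorphic to the cokernel of the morphism G(F'(X)) ⊞ F(G'(X)) ⟶ F(F'(X)) whose components are β_{F'(X)} and F(β'_X). -/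
open CategoryTheory CategoryTheory.Limits

universe v u

/-- For natural transformations `β : G ⟶ F` and `β' : G' ⟶ F'` between additive endofunctors
of an abelian category, with `F` preserving cokernels and `G` preserving epimorphisms, the
cokernel of `β` evaluated at the cokernel of `β'_X` is isomorphic to the cokernel of the
combined map `G(F'(X)) ⊞ F(G'(X)) ⟶ F(F'(X))` with components `β_{F'(X)}` and `F(β'_X)`. -/
theorem cokernel_comp_iso_cokernel_biprod_desc {𝒜 : Type u} [Category.{v} 𝒜] [Abelian 𝒜]
    (F F' G G' : 𝒜 ⥤ 𝒜) [F.Additive] [F'.Additive] [G.Additive] [G'.Additive]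
    (hF : ∀ {A B : 𝒜} (f : A ⟶ B), PreservesColimit (parallelPair f 0) F)
    [G.PreservesEpimorphisms]
    (β : G ⟶ F) (β' : G' ⟶ F') (X : 𝒜) :
    Nonempty
      (cokernel (β.app (cokernel (β'.app X))) ≅
        cokernel (biprod.desc (β.app (F'.obj X)) (F.map (β'.app X)))) := by
  haveI := hF (β'.app X)
  set f := β'.app X
  set c : F'.obj X ⟶ cokernel f := cokernel.π f
  set d := biprod.desc (β.app (F'.obj X)) (F.map f)
  -- F.map c is a cokernel of F.map f
  have hc : IsColimit (Cofork.ofπ (F.map c)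
      (by rw [← F.map_comp, cokernel.condition, Functor.map_zero, zero_comp]) :
        Cofork (F.map f) 0) :=
    isColimitOfHasCokernelOfPreservesColimit F f
  have hnat : G.map c ≫ β.app (cokernel f) = β.app (F'.obj X) ≫ F.map c := (β.naturality c)
  -- map u : F(C') ⟶ cokernel d
  have hk : F.map f ≫ cokernel.π d = 0 ≫ cokernel.π d := by
    rw [zero_comp]
    have : F.map f = biprod.inr ≫ d := by simp [d]
    rw [this, Category.assoc, cokernel.condition, comp_zero]
  set u : F.obj (cokernel f) ⟶ cokernel d := Cofork.IsColimit.desc hc (cokernel.π d) hk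
  have hu : F.map c ≫ u = cokernel.π d := Cofork.IsColimit.π_desc hc
  have h1 : β.app (cokernel f) ≫ u = 0 := by
    haveI : Epi (G.map c) := G.map_epi c
    rw [← cancel_epi (G.map c), reassoc_of% hnat, comp_zero]
    have hβπ : β.app (F'.obj X) ≫ cokernel.π d = 0 := by
      have : β.app (F'.obj X) = biprod.inl ≫ d := by simp [d]
      rw [this, Category.assoc, cokernel.condition, comp_zero]
    rw [hu, hβπ]
  have h2 : d ≫ F.map c ≫ cokernel.π (β.app (cokernel f)) = 0 := by
    apply biprod.hom_ext'
    · simp only [biprod.inl_desc_assoc, comp_zero, d]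
      rw [← reassoc_of% hnat, cokernel.condition, comp_zero]
    · simp only [biprod.inr_desc_assoc, comp_zero, d]
      rw [← F.map_comp_assoc, cokernel.condition, Functor.map_zero, zero_comp]
  refine ⟨⟨cokernel.desc _ u h1, cokernel.desc _ (F.map c ≫ cokernel.π _) h2, ?_, ?_⟩⟩
  · haveI : Epi (F.map c) := by
      have : Epi c := coequalizer.π_epi
      exact epi_of_isColimit_cofork hc
    rw [← cancel_epi (cokernel.π (β.app (cokernel f))), cokernel.π_desc_assoc,
      Category.comp_id, ← cancel_epi (F.map c), ← Category.assoc, hu, cokernel.π_desc]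
  · rw [← cancel_epi (cokernel.π d), cokernel.π_desc_assoc, Category.assoc,
      cokernel.π_desc, Category.comp_id, ← hu]
end
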